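/- Let K be a field with char K ∤ n containing μ_n(K) and a root of T^4 + 4, let f ∈ K×, d the maximal divisor of n such that f = g^d for some g ∈ K, and n' = n/d. Then the ring K[T]/(T^n − f) is isomorphic as a K-algebra to the product ∏_{ζ ∈ μ_d(K)} K[T]/(T^{n'} − ζg), where each factor is a field; in particular K[T]/(T^n − f) is reduced, and it is an integral domain if and only if d = 1. -/

import Mathlib

/-!
Since `g ^ d = f`, the polynomial `X ^ n - f` is the product of the `X ^ n' - ζ g` over the
`d`-th roots of unity `ζ`, and these factors are pairwise coprime because any two differ by a
nonzero constant; the Chinese remainder theorem gives the decomposition. If `ζ g` were a `p`-th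
power for a prime `p ∣ n'`, then `f` would be a `d p`-th power, against the maximality of `d`.
So each factor is irreducible by Capelli's criterion, which, in the presence of a primitive
`m`-th root of unity, goes by induction on the prime factors of `m`: adjoining a `p`-th root `x`
of `c` and taking norms from `K(x)` turns a root of `x` back into a root of `±c`, and the sign
is absorbed by an odd exponent or, when it matters, by a square root of `-1`, which exists
because then `4 ∣ m`.
-/

open Polynomial IntermediateField

universe u

section Capelli

variable {K : Type*} [Field K]

theorem IsPrimitiveRoot.exists_sq_eq_neg_one {ζ : K} {m : ℕ} (hζ : IsPrimitiveRoot ζ m)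
    (hm : 0 < m) (h4 : 4 ∣ m) : ∃ i : K, i ^ 2 = -1 := by
  obtain ⟨k, rfl⟩ := h4
  have hi : IsPrimitiveRoot (ζ ^ k) 4 := hζ.pow hm (mul_comm 4 k)
  exact ⟨ζ ^ k, (hi.pow (by norm_num) (by norm_num : 4 = 2 * 2)).eq_neg_one_of_two_right⟩

theorem exists_pow_eq_of_pow_eq_neg {r : ℕ} (hr : r.Prime) (hi : r = 2 → ∃ i : K, i ^ 2 = -1)
    {u c : K} (hu : u ^ r = -c) : ∃ b : K, b ^ r = c := by
  rcases hr.eq_two_or_odd' with rfl | hodd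
  · obtain ⟨i, hi⟩ := hi rfl
    exact ⟨i * u, by rw [mul_pow, hi, hu]; ring⟩
  · exact ⟨-u, by rw [hodd.neg_pow, hu, neg_neg]⟩

theorem norm_pow_eq_of_minpoly_eq_X_pow_sub_C {E : Type*} [Field E] [Algebra K E] {p r : ℕ}
    (hp : p.Prime) {c : K} {x : E} (hx : minpoly K x = X ^ p - C c) {b : K⟮x⟯}
    (hb : b ^ r = AdjoinSimple.gen K x) : Algebra.norm K b ^ r = (-1) ^ (p + 1) * c := by
  have hint : IsIntegral K x := by
    rw [← minpoly.ne_zero_iff, hx]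
    exact X_pow_sub_C_ne_zero hp.pos c
  rw [← map_pow, hb, ← adjoin.powerBasis_gen hint,
    Algebra.PowerBasis.norm_gen_eq_coeff_zero_minpoly]
  simp [minpoly_gen, hx, hp.ne_zero.symm, pow_succ]

theorem X_pow_sub_C_irreducible_of_isPrimitiveRoot {K : Type u} [Field K] {m : ℕ} (hm : m ≠ 0)
    {ζ : K} (hζ : IsPrimitiveRoot ζ m) {c : K}
    (hc : ∀ p : ℕ, p.Prime → p ∣ m → ∀ b : K, b ^ p ≠ c) : Irreducible (X ^ m - C c) := by
  induction m using induction_on_primes generalizing K c with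
  | zero => exact absurd rfl hm
  | one => simpa using irreducible_X_sub_C c
  | prime_mul p q hp IH =>
    have hq : q ≠ 0 := right_ne_zero_of_mul hm
    rw [mul_comm]
    apply X_pow_mul_sub_C_irreducible
      (X_pow_sub_C_irreducible_of_prime hp (hc p hp (dvd_mul_right _ _)))
    intro E _ _ x hx
    refine IH hq ((hζ.pow (Nat.pos_of_ne_zero hm) rfl).map_of_injective
      (algebraMap K K⟮x⟯).injective) fun r hr hrq b hb ↦ ?_
    have hN := norm_pow_eq_of_minpoly_eq_X_pow_sub_C hp hx hb
    rcases hp.eq_two_or_odd' with rfl | hp_odd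
    · have hi : r = 2 → ∃ i : K, i ^ 2 = -1 := by
        rintro rfl
        exact hζ.exists_sq_eq_neg_one (Nat.pos_of_ne_zero hm) (mul_dvd_mul_left 2 hrq)
      obtain ⟨b', hb'⟩ :=
        exists_pow_eq_of_pow_eq_neg hr hi (u := Algebra.norm K b) (by rw [hN]; ring)
      exact hc r hr (hrq.mul_left 2) b' hb'
    · rw [hp_odd.add_one.neg_one_pow, one_mul] at hN
      exact hc r hr (hrq.mul_left p) _ hN

theorem irreducible_X_pow_sub_C_mul_of_forall_le {d m : ℕ} (hd : 0 < d)
    (hm : m ≠ 0) {ω : K} (hω : IsPrimitiveRoot ω m) {g : K}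
    (hmax : ∀ e : ℕ, e ∣ d * m → (∃ h : K, h ^ e = g ^ d) → e ≤ d) {ζ : K} (hζ : ζ ^ d = 1) :
    Irreducible (X ^ m - C (ζ * g)) := by
  refine X_pow_sub_C_irreducible_of_isPrimitiveRoot hm hω fun p hp hpm b hb ↦ ?_
  have hle := hmax (d * p) (mul_dvd_mul_left d hpm)
    ⟨b, by rw [mul_comm, pow_mul, hb, mul_pow, hζ, one_mul]⟩
  have := Nat.mul_le_mul_left d hp.two_le
  omega

end Capelli

section Factorization

variable {R : Type*} [CommRing R] [IsDomain R] {η : R} {d : ℕ}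

theorem IsPrimitiveRoot.bijective_pow (hη : IsPrimitiveRoot η d) (hd : 0 < d) :
    Function.Bijective fun i : Fin d ↦ (⟨η ^ (i : ℕ), by
      rw [← pow_mul, mul_comm, pow_mul, hη.pow_eq_one, one_pow]⟩ : {ζ : R // ζ ^ d = 1}) := by
  refine ⟨fun i j hij ↦ Fin.ext (hη.pow_inj i.isLt j.isLt (congrArg Subtype.val hij)), ?_⟩
  rintro ⟨ζ, hζ⟩
  have := NeZero.of_pos hd
  obtain ⟨i, hi, rfl⟩ := hη.eq_pow_of_pow_eq_one hζ
  exact ⟨⟨i, hi⟩, rfl⟩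

theorem X_pow_mul_sub_C_eq_prod (hη : IsPrimitiveRoot η d) (hd : 0 < d) (m : ℕ) (g : R) :
    X ^ (d * m) - C (g ^ d) = ∏ i ∈ Finset.range d, (X ^ m - C (η ^ i * g)) := by
  have h := congrArg (·.comp (X ^ m)) (X_pow_sub_C_eq_prod hη hd (rfl : g ^ d = g ^ d))
  simpa [prod_comp, sub_comp, ← pow_mul, mul_comm m d] using h

theorem prod_X_pow_sub_C_mul_eq [Fintype {ζ : R // ζ ^ d = 1}] (hη : IsPrimitiveRoot η d)
    (hd : 0 < d) (m : ℕ) (g : R) :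
    ∏ ζ : {ζ : R // ζ ^ d = 1}, (X ^ m - C (ζ * g)) = X ^ (d * m) - C (g ^ d) := by
  rw [X_pow_mul_sub_C_eq_prod hη hd, ← Fin.prod_univ_eq_prod_range]
  exact (Fintype.prod_bijective _ (hη.bijective_pow hd) _ _ fun _ ↦ rfl).symm

end Factorization

theorem isCoprime_X_pow_sub_C_X_pow_sub_C {K : Type*} [Field K] {a b : K} (hab : a ≠ b) (m : ℕ) :
    IsCoprime (X ^ m - C a) (X ^ m - C b) := by
  refine ⟨C (b - a)⁻¹, -C (b - a)⁻¹, ?_⟩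
  rw [neg_mul, ← sub_eq_add_neg, ← mul_sub, sub_sub_sub_cancel_left, ← C_sub, ← C_mul,
    inv_mul_cancel₀ (sub_ne_zero.2 hab.symm), C_1]

open Function in
noncomputable def AdjoinRoot.algEquivPiOfProdEq {R : Type*} [CommRing R] {ι : Type*}
    [Fintype ι] {p : ι → R[X]} (hp : Pairwise (IsCoprime on p)) {q : R[X]}
    (hq : ∏ i, p i = q) : AdjoinRoot q ≃ₐ[R] ((i : ι) → AdjoinRoot (p i)) :=
  AlgEquiv.ofRingEquiv
    (f := (Ideal.quotEquivOfEq (by rw [Ideal.iInf_span_singleton fun _ _ h ↦ hp h, hq])).trans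
      (Ideal.quotientInfRingEquivPiQuotient _
        fun _ _ h ↦ (Ideal.isCoprime_span_singleton_iff _ _).2 (hp h)))
    fun _ ↦ rfl

theorem subsingleton_of_isDomain_pi {ι : Type*} {A : ι → Type*} [∀ i, Semiring (A i)]
    [∀ i, Nontrivial (A i)] [IsDomain ((i : ι) → A i)] : Subsingleton ι := by
  classical
  refine ⟨fun i j ↦ by_contra fun hij ↦ ?_⟩
  have h : Pi.single i (1 : A i) * Pi.single j (1 : A j) = 0 := by
    ext k
    by_cases hk : k = i
    · subst hk
      simp [Pi.single_eq_of_ne hij]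
    · simp [Pi.single_eq_of_ne hk]
  rcases mul_eq_zero.1 h with h | h <;> simp [Pi.single_eq_zero_iff] at h

theorem stmt_7_general (K : Type*) [Field K] (n : ℕ) (hn : 0 < n)
    (hμ : ∃ ζ : K, IsPrimitiveRoot ζ n)
    (f : K) (hf : f ≠ 0) (d : ℕ) (g : K) (hg : g ^ d = f)
    (hmax : ∀ e : ℕ, e ∣ n → (∃ h : K, h ^ e = f) → e ≤ d)
    (n' : ℕ) (hn' : n = d * n') :
    Nonempty (AdjoinRoot (X ^ n - C f) ≃ₐ[K]
        ((ζ : {ζ : K // ζ ^ d = 1}) → AdjoinRoot (X ^ n' - C ((ζ : K) * g)))) ∧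
      (∀ ζ : {ζ : K // ζ ^ d = 1}, IsField (AdjoinRoot (X ^ n' - C ((ζ : K) * g)))) ∧
      IsReduced (AdjoinRoot (X ^ n - C f)) ∧
      (IsDomain (AdjoinRoot (X ^ n - C f)) ↔ d = 1) := by
  obtain ⟨ω, hω⟩ := hμ
  subst hn' hg
  have hd0 : 0 < d := Nat.pos_of_mul_pos_right hn
  have hη : IsPrimitiveRoot (ω ^ n') d := hω.pow hn (mul_comm d n')
  have hg0 : g ≠ 0 := fun h ↦ hf (by rw [h, zero_pow hd0.ne'])
  have hirr (ζ : {ζ : K // ζ ^ d = 1}) : Fact (Irreducible (X ^ n' - C (ζ * g))) :=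
    ⟨irreducible_X_pow_sub_C_mul_of_forall_le hd0 (Nat.pos_of_mul_pos_left hn).ne'
      (hω.pow hn rfl) hmax ζ.2⟩
  let : Fintype {ζ : K // ζ ^ d = 1} := Fintype.ofBijective _ (hη.bijective_pow hd0)
  let e := AdjoinRoot.algEquivPiOfProdEq
    (fun ζ ξ hζξ ↦ isCoprime_X_pow_sub_C_X_pow_sub_C
      ((mul_left_injective₀ hg0).ne (Subtype.val_injective.ne hζξ)) n')
    (prod_X_pow_sub_C_mul_eq hη hd0 n' g)
  refine ⟨⟨e⟩, fun ζ ↦ Field.toIsField _, isReduced_of_injective e e.injective, fun _ ↦ ?_, ?_⟩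
  · have := e.toMulEquiv.symm.isDomain
    have := subsingleton_of_isDomain_pi
      (A := fun ζ : {ζ : K // ζ ^ d = 1} ↦ AdjoinRoot (X ^ n' - C (ζ * g)))
    have h1 : ω ^ n' = 1 := congrArg Subtype.val
      (Subsingleton.elim (⟨ω ^ n', hη.pow_eq_one⟩ : {ζ : K // ζ ^ d = 1}) ⟨1, one_pow d⟩)
    exact IsPrimitiveRoot.one_left_iff.1 (h1 ▸ hη)
  · rintro rfl
    have := hirr ⟨1, one_pow 1⟩
    rw [one_mul] at this ⊢
    rw [pow_one]
    infer_instance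

/-- With `K`, `n`, `f`, `d`, `g`, `n' = n/d` as in the decomposition lemma, `K[T]/(Tⁿ - f)` is
isomorphic as a `K`-algebra to `∏_{ζ ∈ μ_d(K)} K[T]/(T^{n'} - ζg)`, each factor is a field;
in particular `K[T]/(Tⁿ - f)` is reduced, and it is a domain iff `d = 1`. -/
theorem stmt_7 (K : Type*) [Field K] (n : ℕ) (hn : 0 < n)
    (hchar : ¬ (ringChar K ∣ n)) (hμ : ∃ ζ : K, IsPrimitiveRoot ζ n)
    (hy : ∃ y : K, y ^ 4 = -4)
    (f : K) (hf : f ≠ 0) (d : ℕ) (hd : d ∣ n) (g : K) (hg : g ^ d = f)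
    (hmax : ∀ e : ℕ, e ∣ n → (∃ h : K, h ^ e = f) → e ≤ d)
    (n' : ℕ) (hn' : n = d * n') :
    Nonempty (AdjoinRoot (X ^ n - C f) ≃ₐ[K]
        ((ζ : {ζ : K // ζ ^ d = 1}) → AdjoinRoot (X ^ n' - C ((ζ : K) * g)))) ∧
      (∀ ζ : {ζ : K // ζ ^ d = 1}, IsField (AdjoinRoot (X ^ n' - C ((ζ : K) * g)))) ∧
      IsReduced (AdjoinRoot (X ^ n - C f)) ∧
      (IsDomain (AdjoinRoot (X ^ n - C f)) ↔ d = 1) :=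
  stmt_7_general K n hn hμ f hf d g hg hmax n' hn'
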